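/- Under Assumptions 1, 2 and 3, the identity map on X_c = X̂_c is a feedback refinement relation from the composed abstraction S_c (built from the decomposition (I_σ^c, I_σ, J_σ)_{σ∈Σ}) to the composed abstraction Ŝ_c (built from the decomposition (Î_σ̂^c, Î_σ̂, Ĵ_σ̂)_{σ̂∈Σ̂}); in particular δ_c(s,u) ⊆ δ̂_c(s,u) for all s ∈ X_c^0 and u ∈ U_c. -/

import Mathlib

open Set Function

/-- `ℝⁿ` modeled as `Fin n → ℝ`. -/
abbrev Vec (n : ℕ) : Type := Fin n → ℝ

/-- Projection `π_{I'}` of a dependent tuple onto the components with indices in `I'`. -/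
def proj {ι : Type*} (E : ι → Type*) (I' : Set ι) (x : (i : ι) → E i) : (i : I') → E i.1 :=
  fun i => x i.1

/-- `P` is a finite partition of `A`: finitely many nonempty pairwise disjoint cells covering `A`. -/
def IsFinPartition {α : Type*} (P : Set (Set α)) (A : Set α) : Prop :=
  P.Finite ∧ (∀ s ∈ P, s.Nonempty) ∧ ⋃₀ P = A ∧
    ∀ s ∈ P, ∀ t ∈ P, s ≠ t → Disjoint s t

/-- The family `A : τ → Set α` is a partition of the index type `α`. -/
def IsIndexPartition {τ α : Type*} (A : τ → Set α) : Prop :=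
  (⋃ σ, A σ) = Set.univ ∧ Pairwise (Disjoint on A)

/-- The set `𝒫` of cells `s₁ × ⋯ × s_n̄`, `s_i ∈ 𝒫_i`, of the product partition. -/
def cells {ι : Type*} {E : ι → Type*} (P : (i : ι) → Set (Set (E i))) :
    Set (Set ((i : ι) → E i)) :=
  { s | ∃ f : (i : ι) → Set (E i), (∀ i, f i ∈ P i) ∧ s = Set.pi Set.univ f }

/-- The set `X_σ⁰` of cells `∏_{i ∈ I'} s_i`, `s_i ∈ 𝒫_i`, of the partition restricted to `I'`. -/
def cellsOn {ι : Type*} {E : ι → Type*} (P : (i : ι) → Set (Set (E i))) (I' : Set ι) :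
    Set (Set ((i : I') → E i.1)) :=
  { s | ∃ f : (i : ι) → Set (E i), (∀ i, f i ∈ P i) ∧
        s = Set.pi Set.univ (fun i : I' => f i.1) }

/-- `F(𝒳',𝒰') = ⋃_{x ∈ 𝒳', u ∈ 𝒰'} F(x,u)`. -/
def Fset {X U : Type*} (F : X → U → Set X) (A : Set X) (B : Set U) : Set X :=
  ⋃ x ∈ A, ⋃ u ∈ B, F x u

/-- `Φ_σ(s_σ,u_σ) = F̄(𝒳 ∩ π_{I_σ}⁻¹(s_σ), 𝒰 ∩ π_{J_σ}⁻¹({u_σ}))`. -/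
def Phi {ι κ : Type*} (E : ι → Type*) (Fu : κ → Type*)
    (Fbar : Set ((i : ι) → E i) → Set ((j : κ) → Fu j) → Set ((i : ι) → E i))
    (Xset : Set ((i : ι) → E i)) (Uset : Set ((j : κ) → Fu j))
    (Iσ : Set ι) (Jσ : Set κ)
    (sσ : Set ((i : Iσ) → E i.1)) (uσ : (j : Jσ) → Fu j.1) : Set ((i : ι) → E i) :=
  Fbar (Xset ∩ proj E Iσ ⁻¹' sσ) (Uset ∩ proj Fu Jσ ⁻¹' {uσ})

/-- `Out_σ = π_{I_σ}(ℝⁿ) \ 𝒳_{I_σ}`. -/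
def OutOf {ι : Type*} (E : ι → Type*) (Iσ : Set ι) (Xset : Set ((i : ι) → E i)) :
    Set ((i : Iσ) → E i.1) :=
  proj E Iσ '' Set.univ \ proj E Iσ '' Xset

/-- Transition map `δ_σ` of the symbolic subsystem `S_σ`. -/
def deltaSub {ι κ : Type*} (E : ι → Type*) (Fu : κ → Type*)
    (Fbar : Set ((i : ι) → E i) → Set ((j : κ) → Fu j) → Set ((i : ι) → E i))
    (Xset : Set ((i : ι) → E i)) (Uset : Set ((j : κ) → Fu j))
    (P : (i : ι) → Set (Set (E i))) (V : (j : κ) → Set (Fu j))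
    (Iσ Icσ : Set ι) (Jσ : Set κ)
    (sσ : Set ((i : Iσ) → E i.1)) (uσ : (j : Jσ) → Fu j.1) :
    Set (Set ((i : Iσ) → E i.1)) :=
  { s' | sσ ∈ cellsOn P Iσ ∧ uσ ∈ Set.pi Set.univ (fun j : Jσ => V j.1) ∧
      ((s' ∈ cellsOn P Iσ ∧
          (s' ∩ proj E Iσ '' Phi E Fu Fbar Xset Uset Iσ Jσ sσ uσ).Nonempty) ∨
        (s' = OutOf E Iσ Xset ∧
          (proj E Iσ '' Phi E Fu Fbar Xset Uset Iσ Jσ sσ uσ ∩ proj E Iσ '' Xset = ∅ ∨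
            ¬proj E Icσ '' Phi E Fu Fbar Xset Uset Iσ Jσ sσ uσ ⊆ proj E Icσ '' Xset))) }

/-- Transition map `δ_c` of the composed abstraction `S_c`. -/
def deltaC {ι κ τ : Type*} (E : ι → Type*) (Fu : κ → Type*)
    (Fbar : Set ((i : ι) → E i) → Set ((j : κ) → Fu j) → Set ((i : ι) → E i))
    (Xset : Set ((i : ι) → E i)) (Uset : Set ((j : κ) → Fu j))
    (P : (i : ι) → Set (Set (E i))) (V : (j : κ) → Set (Fu j))
    (Im Ic : τ → Set ι) (Jm : τ → Set κ)
    (s : Set ((i : ι) → E i)) (u : (j : κ) → Fu j) :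
    Set (Set ((i : ι) → E i)) :=
  { s' | s ∈ cells P ∧ u ∈ Set.pi Set.univ V ∧
      ((s' ∈ cells P ∧ ∀ σ : τ,
          proj E (Im σ) '' s' ∈
            deltaSub E Fu Fbar Xset Uset P V (Im σ) (Ic σ) (Jm σ)
              (proj E (Im σ) '' s) (proj Fu (Jm σ) u)) ∨
        (s' = Xsetᶜ ∧ ∃ σ : τ,
          OutOf E (Im σ) Xset ∈
            deltaSub E Fu Fbar Xset Uset P V (Im σ) (Ic σ) (Jm σ)
              (proj E (Im σ) '' s) (proj Fu (Jm σ) u))) }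

/-- Safety controller for the transition map `δ` and the safe set `safe`. -/
def IsSafetyController {X U : Type*} (δ : X → U → Set X) (safe : Set X) (C : X → Set U) : Prop :=
  (∀ x, ∀ u ∈ C x, (δ x u).Nonempty) ∧
  (∀ x, (C x).Nonempty → x ∈ safe) ∧
  (∀ x, ∀ u ∈ C x, ∀ x', x' ∈ δ x u → (C x').Nonempty)

/-- Maximal safety controller. -/
def IsMaximalSafetyController {X U : Type*} (δ : X → U → Set X) (safe : Set X)
    (Cstar : X → Set U) : Prop :=
  IsSafetyController δ safe Cstar ∧
    ∀ C, IsSafetyController δ safe C → ∀ x, C x ⊆ Cstar x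

/-- Feedback refinement relation (over a common input type). -/
def IsFeedbackRefinement {Xa Xb U : Type*} (δa : Xa → U → Set Xa) (δb : Xb → U → Set Xb)
    (H : Xa → Xb) : Prop :=
  ∀ xa : Xa,
    (∀ u, (δb (H xa) u).Nonempty → (δa xa u).Nonempty) ∧
    (∀ u, (δb (H xa) u).Nonempty → H '' δa xa u ⊆ δb (H xa) u)

/-- Concrete transition map of `S = (ℝⁿ, 𝒰, F)` (inputs restricted to `𝒰`). -/
def deltaConc {X U : Type*} (F : X → U → Set X) (Uset : Set U) (x : X) (u : U) : Set X :=
  { x' | u ∈ Uset ∧ x' ∈ F x u }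

/-!
Refining a decomposition only shrinks the index sets, so by monotonicity of `F̄` every
`Φ̂_σ̂(s, u)` contains `Φ_{γ σ̂}(s, u)`; hence a cell reached in every subsystem of `S_c` is
still reached in every subsystem of `Ŝ_c`. A transition of `S_c` to `Out` is witnessed by a
point `x` of some `Φ_σ` leaving `𝒳` in a coordinate `i`. The subsystem `σ̂` with `i ∈ Î^c_σ̂`
sees the same point: if `i ∈ I^c_σ` then `γ σ̂ = σ` and `Φ_σ ⊆ Φ̂_σ̂`; otherwise `π_{I_σ} Φ_σ`
misses `𝒳_{I_σ}` altogether, so `x` may be taken in `F(x₀, u) ⊆ Φ̂_σ̂` for any `x₀ ∈ s`.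
Since `F` is nowhere empty, every cell has a successor under every input of `U_c`.
-/

namespace IsFinPartition

variable {α : Type*} {P : Set (Set α)} {A s : Set α}

lemma nonempty_of_mem (h : IsFinPartition P A) (hs : s ∈ P) : s.Nonempty :=
  h.2.1 s hs

lemma subset_of_mem (h : IsFinPartition P A) (hs : s ∈ P) : s ⊆ A :=
  h.2.2.1 ▸ subset_sUnion_of_mem hs

lemma exists_mem_of_mem (h : IsFinPartition P A) {a : α} (ha : a ∈ A) : ∃ t ∈ P, a ∈ t :=
  mem_sUnion.1 (h.2.2.1.symm ▸ ha)

end IsFinPartition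

namespace IsIndexPartition

variable {τ α : Type*} {A : τ → Set α}

lemma exists_mem (h : IsIndexPartition A) (a : α) : ∃ σ, a ∈ A σ :=
  mem_iUnion.1 (h.1.symm ▸ mem_univ a)

lemma eq_of_mem (h : IsIndexPartition A) {a : α} {σ σ' : τ} (hσ : a ∈ A σ) (hσ' : a ∈ A σ') :
    σ = σ' := by
  by_contra hne
  exact disjoint_left.1 (h.2 hne) hσ hσ'

end IsIndexPartition

section Projection

variable {ι : Type*} {E : ι → Type*} {I I' : Set ι}

lemma proj_image_univ_pi {X : (i : ι) → Set (E i)} (hX : ∀ i, (X i).Nonempty) :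
    proj E I '' pi univ X = pi univ (fun i : I => X i) := by
  classical
  refine Subset.antisymm (fun _ ⟨x, hx, hxz⟩ i _ => hxz ▸ hx i.1 trivial) fun z hz => ?_
  refine ⟨fun i => if h : i ∈ I then z ⟨i, h⟩ else (hX i).some, fun i _ => ?_, ?_⟩
  · by_cases h : i ∈ I
    · simpa only [dif_pos h] using hz ⟨i, h⟩ trivial
    · simpa only [dif_neg h] using (hX i).some_mem
  · funext i
    simp only [proj, dif_pos i.2]

lemma proj_mem_image_univ_pi_iff {X : (i : ι) → Set (E i)} (hX : ∀ i, (X i).Nonempty)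
    {x : (i : ι) → E i} : proj E I x ∈ proj E I '' pi univ X ↔ ∀ i ∈ I, x i ∈ X i := by
  rw [proj_image_univ_pi hX, mem_univ_pi, Subtype.forall]
  rfl

lemma proj_eq_of_subset (hI : I' ⊆ I) {x y : (i : ι) → E i} (h : proj E I x = proj E I y) :
    proj E I' x = proj E I' y :=
  funext fun i => congrFun h ⟨i.1, hI i.2⟩

lemma preimage_proj_image_mono (hI : I' ⊆ I) (s : Set ((i : ι) → E i)) :
    proj E I ⁻¹' (proj E I '' s) ⊆ proj E I' ⁻¹' (proj E I' '' s) :=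
  fun _ ⟨y, hy, hyx⟩ => ⟨y, hy, proj_eq_of_subset hI hyx⟩

lemma proj_image_inter_nonempty_mono (hI : I' ⊆ I) {s A B : Set ((i : ι) → E i)} (hAB : A ⊆ B)
    (h : (proj E I '' s ∩ proj E I '' A).Nonempty) :
    (proj E I' '' s ∩ proj E I' '' B).Nonempty := by
  obtain ⟨_, ⟨y, hy, hyp⟩, ⟨x, hx, rfl⟩⟩ := h
  exact ⟨proj E I' x, ⟨y, hy, proj_eq_of_subset hI hyp⟩, ⟨x, hAB hx, rfl⟩⟩

end Projection

section Cells

variable {ι : Type*} {E : ι → Type*} {P : (i : ι) → Set (Set (E i))} {X : (i : ι) → Set (E i)}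
  {s : Set ((i : ι) → E i)}

lemma nonempty_of_mem_cells (hP : ∀ i, IsFinPartition (P i) (X i)) (hs : s ∈ cells P) :
    s.Nonempty := by
  obtain ⟨f, hf, rfl⟩ := hs
  exact univ_pi_nonempty_iff.2 fun i => (hP i).nonempty_of_mem (hf i)

lemma subset_of_mem_cells (hP : ∀ i, IsFinPartition (P i) (X i)) (hs : s ∈ cells P) :
    s ⊆ pi univ X := by
  obtain ⟨f, hf, rfl⟩ := hs
  exact pi_mono fun i _ => (hP i).subset_of_mem (hf i)

lemma exists_mem_cells_of_mem (hP : ∀ i, IsFinPartition (P i) (X i)) {x : (i : ι) → E i}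
    (hx : x ∈ pi univ X) : ∃ s ∈ cells P, x ∈ s := by
  choose f hf hxf using fun i => (hP i).exists_mem_of_mem (hx i trivial)
  exact ⟨pi univ f, ⟨f, hf, rfl⟩, fun i _ => hxf i⟩

lemma proj_image_mem_cellsOn (hP : ∀ i, IsFinPartition (P i) (X i)) (hs : s ∈ cells P)
    (I : Set ι) : proj E I '' s ∈ cellsOn P I := by
  obtain ⟨f, hf, rfl⟩ := hs
  exact ⟨f, hf, proj_image_univ_pi fun i => (hP i).nonempty_of_mem (hf i)⟩

lemma nonempty_of_mem_cellsOn (hP : ∀ i, IsFinPartition (P i) (X i)) {I : Set ι}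
    {t : Set ((i : I) → E i)} (ht : t ∈ cellsOn P I) (i : ι) : (X i).Nonempty := by
  obtain ⟨f, hf, -⟩ := ht
  exact ((hP i).nonempty_of_mem (hf i)).mono ((hP i).subset_of_mem (hf i))

lemma subset_proj_image_of_mem_cellsOn (hP : ∀ i, IsFinPartition (P i) (X i)) {I : Set ι}
    {t : Set ((i : I) → E i)} (ht : t ∈ cellsOn P I) : t ⊆ proj E I '' pi univ X := by
  rw [proj_image_univ_pi (nonempty_of_mem_cellsOn hP ht)]
  obtain ⟨f, hf, rfl⟩ := ht
  exact pi_mono fun i _ => (hP i).subset_of_mem (hf i)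

end Cells

section Abstraction

variable {ι κ : Type*} {E : ι → Type*} {Fu : κ → Type*}
  {F : ((i : ι) → E i) → ((j : κ) → Fu j) → Set ((i : ι) → E i)}
  {Fbar : Set ((i : ι) → E i) → Set ((j : κ) → Fu j) → Set ((i : ι) → E i)}
  {X : (i : ι) → Set (E i)} {U : Set ((j : κ) → Fu j)}
  {P : (i : ι) → Set (Set (E i))} {V : (j : κ) → Set (Fu j)}
  {s s' : Set ((i : ι) → E i)} {u : (j : κ) → Fu j} {I I' Ic : Set ι} {J J' : Set κ}

lemma subset_Phi (hFbar : ∀ A B, Fset F A B ⊆ Fbar A B) {x₀ : (i : ι) → E i}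
    (hx₀X : x₀ ∈ pi univ X) (hx₀s : x₀ ∈ s) (hu : u ∈ U) :
    F x₀ u ⊆ Phi E Fu Fbar (pi univ X) U I J (proj E I '' s) (proj Fu J u) :=
  fun _ hx => hFbar _ _ <|
    mem_biUnion ⟨hx₀X, x₀, hx₀s, rfl⟩ (mem_biUnion (x := u) ⟨hu, rfl⟩ hx)

lemma Phi_mono
    (hMono : ∀ A A' B B', A ⊆ A' → B ⊆ B' → B' ⊆ U → Fbar A B ⊆ Fbar A' B')
    (hI : I' ⊆ I) (hJ : J' ⊆ J) :
    Phi E Fu Fbar (pi univ X) U I J (proj E I '' s) (proj Fu J u) ⊆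
      Phi E Fu Fbar (pi univ X) U I' J' (proj E I' '' s) (proj Fu J' u) :=
  hMono _ _ _ _ (inter_subset_inter_right _ (preimage_proj_image_mono hI s))
    (inter_subset_inter_right _ fun _ hv => (proj_eq_of_subset hJ hv :))
    inter_subset_left

lemma proj_image_mem_deltaSub (hP : ∀ i, IsFinPartition (P i) (X i))
    (hs : s ∈ cells P) (hu : u ∈ pi univ V) (hs' : s' ∈ cells P)
    (h : (proj E I '' s' ∩
      proj E I '' Phi E Fu Fbar (pi univ X) U I J (proj E I '' s) (proj Fu J u)).Nonempty) :
    proj E I '' s' ∈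
      deltaSub E Fu Fbar (pi univ X) U P V I Ic J (proj E I '' s) (proj Fu J u) :=
  ⟨proj_image_mem_cellsOn hP hs I, fun j _ => hu j trivial,
    Or.inl ⟨proj_image_mem_cellsOn hP hs' I, h⟩⟩

lemma OutOf_mem_deltaSub (hP : ∀ i, IsFinPartition (P i) (X i))
    (hs : s ∈ cells P) (hu : u ∈ pi univ V) {x : (i : ι) → E i}
    (hx : x ∈ Phi E Fu Fbar (pi univ X) U I J (proj E I '' s) (proj Fu J u))
    {i : ι} (hi : i ∈ Ic) (hxi : x i ∉ X i) :
    OutOf E I (pi univ X) ∈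
      deltaSub E Fu Fbar (pi univ X) U P V I Ic J (proj E I '' s) (proj Fu J u) := by
  refine ⟨proj_image_mem_cellsOn hP hs I, fun j _ => hu j trivial, Or.inr ⟨rfl, Or.inr ?_⟩⟩
  rintro hsub
  obtain ⟨y, hy, hyx⟩ := hsub ⟨x, hx, rfl⟩
  have hyx : y i = x i := congrFun hyx ⟨i, hi⟩
  exact hxi (hyx ▸ hy i trivial)

lemma inter_nonempty_of_proj_image_mem_deltaSub (hP : ∀ i, IsFinPartition (P i) (X i))
    (hs' : s' ∈ cells P) {sσ : Set ((i : I) → E i)} {uσ : (j : J) → Fu j}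
    (h : proj E I '' s' ∈ deltaSub E Fu Fbar (pi univ X) U P V I Ic J sσ uσ) :
    (proj E I '' s' ∩ proj E I '' Phi E Fu Fbar (pi univ X) U I J sσ uσ).Nonempty := by
  obtain ⟨-, -, ⟨-, hne⟩ | ⟨hOut, -⟩⟩ := h
  · exact hne
  · -- a nonempty cell inside `𝒳` cannot be the complement `Out_σ`
    obtain ⟨x, hx⟩ := nonempty_of_mem_cells hP hs'
    have hxOut : proj E I x ∈ OutOf E I (pi univ X) := hOut ▸ mem_image_of_mem _ hx
    exact absurd (mem_image_of_mem _ (subset_of_mem_cells hP hs' hx)) hxOut.2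

lemma exists_notMem_of_OutOf_mem_deltaSub (hP : ∀ i, IsFinPartition (P i) (X i))
    {sσ : Set ((i : I) → E i)} {uσ : (j : J) → Fu j}
    (h : OutOf E I (pi univ X) ∈ deltaSub E Fu Fbar (pi univ X) U P V I Ic J sσ uσ) :
    (∀ x ∈ Phi E Fu Fbar (pi univ X) U I J sσ uσ, ∃ i ∈ I, x i ∉ X i) ∨
      ∃ x ∈ Phi E Fu Fbar (pi univ X) U I J sσ uσ, ∃ i ∈ Ic, x i ∉ X i := by
  obtain ⟨hsσ, -, ⟨hcell, q, hq, -⟩ | ⟨-, hdisj | hnsub⟩⟩ := h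
  · exact absurd (subset_proj_image_of_mem_cellsOn hP hcell hq) hq.2
  · have hX := nonempty_of_mem_cellsOn hP hsσ
    refine Or.inl fun x hx => ?_
    by_contra! hxX
    exact eq_empty_iff_forall_notMem.1 hdisj _
      ⟨mem_image_of_mem _ hx, (proj_mem_image_univ_pi_iff hX).2 hxX⟩
  · have hX := nonempty_of_mem_cellsOn hP hsσ
    obtain ⟨_, ⟨x, hx, rfl⟩, hxX⟩ := not_subset.1 hnsub
    rw [proj_mem_image_univ_pi_iff hX] at hxX
    push Not at hxX
    exact Or.inr ⟨x, hx, hxX⟩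

end Abstraction

section Composition

variable {ι κ τ τ' : Type*} {E : ι → Type*} {Fu : κ → Type*}
  {F : ((i : ι) → E i) → ((j : κ) → Fu j) → Set ((i : ι) → E i)}
  {Fbar : Set ((i : ι) → E i) → Set ((j : κ) → Fu j) → Set ((i : ι) → E i)}
  {X : (i : ι) → Set (E i)} {U : Set ((j : κ) → Fu j)}
  {P : (i : ι) → Set (Set (E i))} {V : (j : κ) → Set (Fu j)}
  {Im Ic : τ → Set ι} {Jm : τ → Set κ} {Im' Ic' : τ' → Set ι} {Jm' : τ' → Set κ}
  {s : Set ((i : ι) → E i)} {u : (j : κ) → Fu j}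

theorem deltaC_nonempty (hF : ∀ x u, u ∈ U → (F x u).Nonempty)
    (hFbar : ∀ A B, Fset F A B ⊆ Fbar A B) (hP : ∀ i, IsFinPartition (P i) (X i))
    (hVU : pi univ V ⊆ U) (hIc : IsIndexPartition Ic) (hs : s ∈ cells P)
    (hu : u ∈ pi univ V) :
    (deltaC E Fu Fbar (pi univ X) U P V Im Ic Jm s u).Nonempty := by
  obtain ⟨x₀, hx₀⟩ := nonempty_of_mem_cells hP hs
  have hx₀X := subset_of_mem_cells hP hs hx₀
  obtain ⟨x, hx⟩ := hF x₀ u (hVU hu)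
  by_cases hxX : x ∈ pi univ X
  · obtain ⟨s', hs', hxs'⟩ := exists_mem_cells_of_mem hP hxX
    refine ⟨s', hs, hu, Or.inl ⟨hs', fun σ => proj_image_mem_deltaSub hP hs hu hs' ?_⟩⟩
    exact ⟨_, mem_image_of_mem _ hxs', mem_image_of_mem _ (subset_Phi hFbar hx₀X hx₀ (hVU hu) hx)⟩
  · obtain ⟨i, hxi⟩ : ∃ i, x i ∉ X i := by simpa [mem_univ_pi] using hxX
    obtain ⟨σ, hiσ⟩ := hIc.exists_mem i
    exact ⟨_, hs, hu, Or.inr ⟨rfl, σ,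
      OutOf_mem_deltaSub hP hs hu (subset_Phi hFbar hx₀X hx₀ (hVU hu) hx) hiσ hxi⟩⟩

theorem deltaC_subset_deltaC_of_refines (hF : ∀ x u, u ∈ U → (F x u).Nonempty)
    (hFbar : ∀ A B, Fset F A B ⊆ Fbar A B) (hP : ∀ i, IsFinPartition (P i) (X i))
    (hVU : pi univ V ⊆ U) (hIc : IsIndexPartition Ic) (hIc' : IsIndexPartition Ic')
    (γ : τ' → τ) (hγ : ∀ σ', Ic' σ' ⊆ Ic (γ σ') ∧ Im' σ' ⊆ Im (γ σ') ∧ Jm' σ' ⊆ Jm (γ σ'))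
    (hMono : ∀ A A' B B', A ⊆ A' → B ⊆ B' → B' ⊆ U → Fbar A B ⊆ Fbar A' B') :
    deltaC E Fu Fbar (pi univ X) U P V Im Ic Jm s u ⊆
      deltaC E Fu Fbar (pi univ X) U P V Im' Ic' Jm' s u := by
  rintro s' ⟨hs, hu, ⟨hs', hσ⟩ | ⟨rfl, σ, hOut⟩⟩
  · refine ⟨hs, hu, Or.inl ⟨hs', fun σ' => proj_image_mem_deltaSub hP hs hu hs' ?_⟩⟩
    exact proj_image_inter_nonempty_mono (hγ σ').2.1
      (Phi_mono hMono (hγ σ').2.1 (hγ σ').2.2)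
      (inter_nonempty_of_proj_image_mem_deltaSub hP hs' (hσ (γ σ')))
  · suffices ∃ σ', ∃ x ∈ Phi E Fu Fbar (pi univ X) U (Im' σ') (Jm' σ')
        (proj E (Im' σ') '' s) (proj Fu (Jm' σ') u), ∃ i ∈ Ic' σ', x i ∉ X i by
      obtain ⟨σ', x, hx, i, hi, hxi⟩ := this
      exact ⟨hs, hu, Or.inr ⟨rfl, σ', OutOf_mem_deltaSub hP hs hu hx hi hxi⟩⟩
    rcases exists_notMem_of_OutOf_mem_deltaSub hP hOut with hall | ⟨x, hx, i, hiσ, hxi⟩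
    · obtain ⟨x₀, hx₀⟩ := nonempty_of_mem_cells hP hs
      have hx₀X := subset_of_mem_cells hP hs hx₀
      obtain ⟨x, hx⟩ := hF x₀ u (hVU hu)
      obtain ⟨i, -, hxi⟩ := hall x (subset_Phi hFbar hx₀X hx₀ (hVU hu) hx)
      obtain ⟨σ', hiσ'⟩ := hIc'.exists_mem i
      exact ⟨σ', x, subset_Phi hFbar hx₀X hx₀ (hVU hu) hx, i, hiσ', hxi⟩
    · obtain ⟨σ', hiσ'⟩ := hIc'.exists_mem i
      obtain rfl : γ σ' = σ := hIc.eq_of_mem ((hγ σ').1 hiσ') hiσ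
      exact ⟨σ', x, Phi_mono hMono (hγ σ').2.1 (hγ σ').2.2 hx, i, hiσ', hxi⟩

end Composition

lemma isFeedbackRefinement_id {X U : Type*} {δa δb : X → U → Set X}
    (hsub : ∀ x u, δa x u ⊆ δb x u) (hne : ∀ x u, (δb x u).Nonempty → (δa x u).Nonempty) :
    IsFeedbackRefinement δa δb id :=
  fun x => ⟨hne x, fun u _ => (image_id _).symm ▸ hsub x u⟩

theorem stmt5_general
    {ι κ τ : Type*}
    (nd : ι → ℕ) (pd : κ → ℕ)
    (𝒳i : (i : ι) → Set (Vec (nd i))) (𝒰j : (j : κ) → Set (Vec (pd j)))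
    (F : ((i : ι) → Vec (nd i)) → ((j : κ) → Vec (pd j)) → Set ((i : ι) → Vec (nd i)))
    (Fbar : Set ((i : ι) → Vec (nd i)) → Set ((j : κ) → Vec (pd j)) →
      Set ((i : ι) → Vec (nd i)))
    (P : (i : ι) → Set (Set (Vec (nd i)))) (V : (j : κ) → Set (Vec (pd j)))
    (Im Ic : τ → Set ι) (Jm : τ → Set κ)
    (hF : ∀ x u, u ∈ Set.pi Set.univ 𝒰j → (F x u).Nonempty)
    (hFbar : ∀ A B, Fset F A B ⊆ Fbar A B)
    (hP : ∀ i, IsFinPartition (P i) (𝒳i i))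
    (hV : ∀ j, (V j).Finite ∧ V j ⊆ 𝒰j j)
    (hIc : IsIndexPartition Ic)
    {τ' : Type*}
    (Im' Ic' : τ' → Set ι) (Jm' : τ' → Set κ)
    (hIc' : IsIndexPartition Ic')
    (γ : τ' → τ)
    (hA2 : ∀ σ', Ic' σ' ⊆ Ic (γ σ') ∧ Im' σ' ⊆ Im (γ σ') ∧ Jm' σ' ⊆ Jm (γ σ'))
    (hMono : ∀ A A' B B', A ⊆ A' → B ⊆ B' → B' ⊆ Set.pi Set.univ 𝒰j → Fbar A B ⊆ Fbar A' B') :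
    IsFeedbackRefinement (deltaC (fun i => Vec (nd i)) (fun j => Vec (pd j)) Fbar (Set.pi Set.univ 𝒳i) (Set.pi Set.univ 𝒰j) P V Im Ic Jm) (deltaC (fun i => Vec (nd i)) (fun j => Vec (pd j)) Fbar (Set.pi Set.univ 𝒳i) (Set.pi Set.univ 𝒰j) P V Im' Ic' Jm') id ∧
      ∀ s ∈ cells P, ∀ u ∈ Set.pi Set.univ V,
        deltaC (fun i => Vec (nd i)) (fun j => Vec (pd j)) Fbar (Set.pi Set.univ 𝒳i) (Set.pi Set.univ 𝒰j) P V Im Ic Jm s u ⊆ deltaC (fun i => Vec (nd i)) (fun j => Vec (pd j)) Fbar (Set.pi Set.univ 𝒳i) (Set.pi Set.univ 𝒰j) P V Im' Ic' Jm' s u := by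
  have hVU : pi univ V ⊆ pi univ 𝒰j := pi_mono fun j _ => (hV j).2
  have hsub := fun s u =>
    deltaC_subset_deltaC_of_refines (s := s) (u := u) hF hFbar hP hVU hIc hIc' γ hA2 hMono
  refine ⟨isFeedbackRefinement_id hsub fun s u hne => ?_, fun s _ u _ => hsub s u⟩
  obtain ⟨_, hs, hu, -⟩ := hne
  exact deltaC_nonempty hF hFbar hP hVU hIc hs hu

theorem stmt5
    {ι κ τ : Type*} [Finite ι] [Finite κ] [Finite τ]
    (nd : ι → ℕ) (pd : κ → ℕ)
    (𝒳i : (i : ι) → Set (Vec (nd i))) (𝒰j : (j : κ) → Set (Vec (pd j)))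
    (F : ((i : ι) → Vec (nd i)) → ((j : κ) → Vec (pd j)) → Set ((i : ι) → Vec (nd i)))
    (Fbar : Set ((i : ι) → Vec (nd i)) → Set ((j : κ) → Vec (pd j)) →
      Set ((i : ι) → Vec (nd i)))
    (P : (i : ι) → Set (Set (Vec (nd i)))) (V : (j : κ) → Set (Vec (pd j)))
    (Im Ic : τ → Set ι) (Jm : τ → Set κ)
    (hF : ∀ x u, u ∈ Set.pi Set.univ 𝒰j → (F x u).Nonempty)
    (hFbar : ∀ A B, Fset F A B ⊆ Fbar A B)
    (hP : ∀ i, IsFinPartition (P i) (𝒳i i))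
    (hV : ∀ j, (V j).Finite ∧ V j ⊆ 𝒰j j)
    (hIc : IsIndexPartition Ic) (hIcne : ∀ σ, (Ic σ).Nonempty) (hIcIm : ∀ σ, Ic σ ⊆ Im σ)
    (hJ : IsIndexPartition Jm) (hJne : ∀ σ, (Jm σ).Nonempty)
    {τ' : Type*} [Finite τ']
    (Im' Ic' : τ' → Set ι) (Jm' : τ' → Set κ)
    (hIc' : IsIndexPartition Ic') (hIcne' : ∀ σ', (Ic' σ').Nonempty)
    (hIcIm' : ∀ σ', Ic' σ' ⊆ Im' σ')
    (hJ' : IsIndexPartition Jm') (hJne' : ∀ σ', (Jm' σ').Nonempty)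
    (γ : τ' → τ) (hγ : Function.Surjective γ)
    (hA2 : ∀ σ', Ic' σ' ⊆ Ic (γ σ') ∧ Im' σ' ⊆ Im (γ σ') ∧ Jm' σ' ⊆ Jm (γ σ'))
    (hMono : ∀ A A' B B', A ⊆ A' → B ⊆ B' → B' ⊆ Set.pi Set.univ 𝒰j → Fbar A B ⊆ Fbar A' B') :
    IsFeedbackRefinement (deltaC (fun i => Vec (nd i)) (fun j => Vec (pd j)) Fbar (Set.pi Set.univ 𝒳i) (Set.pi Set.univ 𝒰j) P V Im Ic Jm) (deltaC (fun i => Vec (nd i)) (fun j => Vec (pd j)) Fbar (Set.pi Set.univ 𝒳i) (Set.pi Set.univ 𝒰j) P V Im' Ic' Jm') id ∧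
      ∀ s ∈ cells P, ∀ u ∈ Set.pi Set.univ V,
        deltaC (fun i => Vec (nd i)) (fun j => Vec (pd j)) Fbar (Set.pi Set.univ 𝒳i) (Set.pi Set.univ 𝒰j) P V Im Ic Jm s u ⊆ deltaC (fun i => Vec (nd i)) (fun j => Vec (pd j)) Fbar (Set.pi Set.univ 𝒳i) (Set.pi Set.univ 𝒰j) P V Im' Ic' Jm' s u :=
  stmt5_general nd pd 𝒳i 𝒰j F Fbar P V Im Ic Jm hF hFbar hP hV hIc Im' Ic' Jm' hIc' γ hA2 hMono
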